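/- Let x be a tree-like vertex of a hypergraph H = (V,E) and let y ≠ x be another vertex. Then x is still tree-like in the hypergraph H∖{y} obtained by removing y and all edges incident to y. -/

import Mathlib

attribute [local instance] Classical.propDecidable

open Finset Matrix

/-! ## Signed hypergraphs (edges indexed by a type `E`; `sign v e ∈ {0, 1, -1}`,
nonzero exactly on incidences) -/

structure SignedHypergraph (V E : Type) where
  sign : V → E → ℝ
  sign_values : ∀ v e, sign v e = 0 ∨ sign v e = 1 ∨ sign v e = -1

namespace SignedHypergraph

variable {V E : Type} [Fintype V] [Fintype E] [DecidableEq V] [DecidableEq E]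

/-- The vertex set of an edge. -/
noncomputable def edgeVerts (G : SignedHypergraph V E) (e : E) : Finset V :=
  Finset.univ.filter fun v => G.sign v e ≠ 0

/-- The degree of a vertex. -/
noncomputable def deg (G : SignedHypergraph V E) (v : V) : ℕ :=
  (Finset.univ.filter fun e : E => G.sign v e ≠ 0).card

/-- The sign of an edge: `sgn e = (-1)^(|e|-1) ∏_{v ∈ e} σ(v,e)`. -/
noncomputable def edgeSign (G : SignedHypergraph V E) (e : E) : ℝ :=
  (-1 : ℝ) ^ ((G.edgeVerts e).card - 1) * ∏ v ∈ G.edgeVerts e, G.sign v e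

/-- The signed adjacency matrix. -/
noncomputable def adj (G : SignedHypergraph V E) : Matrix V V ℝ :=
  Matrix.of fun x y =>
    if x = y then 0
    else ∑ e ∈ Finset.univ.filter (fun e : E => G.sign x e ≠ 0 ∧ G.sign y e ≠ 0), G.edgeSign e

/-- The normalized Laplacian `L = I - D⁻¹ A`. -/
noncomputable def lap (G : SignedHypergraph V E) : Matrix V V ℝ :=
  Matrix.of fun x y => (if x = y then (1 : ℝ) else 0) - G.adj x y / (G.deg x : ℝ)

/-- The degree-weighted inner product `⟨f, g⟩ = ∑ v deg(v) f(v) g(v)`. -/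
noncomputable def dInner (G : SignedHypergraph V E) (f g : V → ℝ) : ℝ :=
  ∑ v : V, (G.deg v : ℝ) * f v * g v

/-- Two vertices share an edge. -/
def Adjacent (G : SignedHypergraph V E) (x y : V) : Prop :=
  ∃ e : E, G.sign x e ≠ 0 ∧ G.sign y e ≠ 0

/-- The underlying hypergraph is connected. -/
def Connected (G : SignedHypergraph V E) : Prop :=
  ∀ x y : V, Relation.ReflTransGen G.Adjacent x y

/-- One step of a strong nodal domain path: `x, y` in a common edge `e` with
`f x · sgn e · f y > 0`. -/
def sStep (G : SignedHypergraph V E) (f : V → ℝ) (x y : V) : Prop :=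
  ∃ e : E, G.sign x e ≠ 0 ∧ G.sign y e ≠ 0 ∧ 0 < f x * G.edgeSign e * f y

/-- The number `𝔖(f)` of strong nodal domains: equivalence classes of the support of `f`
under joining by S-paths. -/
noncomputable def strongDomainCount (G : SignedHypergraph V E) (f : V → ℝ) : ℕ :=
  Set.ncard {D : Set V | ∃ w, f w ≠ 0 ∧ D = {x | Relation.ReflTransGen (G.sStep f) w x}}

/-- A weak nodal domain path: a walk along edges such that any two consecutive nonzeros
`v i`, `v j` of `f` (joined through zeros by the edges `e i, …, e (j-1)`) satisfy
`f (v i) · sgn (e i) ⋯ sgn (e (j-1)) · f (v j) > 0`. -/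
def IsWPath (G : SignedHypergraph V E) (f : V → ℝ) {ℓ : ℕ}
    (v : Fin (ℓ + 1) → V) (e : Fin ℓ → E) : Prop :=
  (∀ t : Fin ℓ, G.sign (v t.castSucc) (e t) ≠ 0 ∧ G.sign (v t.succ) (e t) ≠ 0) ∧
  ∀ i j : Fin (ℓ + 1), i < j → f (v i) ≠ 0 → f (v j) ≠ 0 →
    (∀ k : Fin (ℓ + 1), i < k → k < j → f (v k) = 0) →
    0 < f (v i) *
        (∏ t : Fin ℓ, if (i : ℕ) ≤ (t : ℕ) ∧ (t : ℕ) < (j : ℕ) then G.edgeSign (e t) else 1) *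
        f (v j)

/-- `x` and `y` are joined by a W-path (or equal). -/
def wRel (G : SignedHypergraph V E) (f : V → ℝ) (x y : V) : Prop :=
  x = y ∨ ∃ (ℓ : ℕ) (v : Fin (ℓ + 1) → V) (e : Fin ℓ → E),
    G.IsWPath f v e ∧ v 0 = x ∧ v (Fin.last ℓ) = y

/-- The weak nodal domain of a vertex `w` in the support of `f`: the equivalence class
of `w` under the W-path relation on the support, enlarged by the zero vertices
W-path-connected to it. -/
def weakDomain (G : SignedHypergraph V E) (f : V → ℝ) (w : V) : Set V :=
  {x | ∃ y, f y ≠ 0 ∧ G.wRel f w y ∧ G.wRel f x y}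

def IsWeakNodalDomain (G : SignedHypergraph V E) (f : V → ℝ) (D : Set V) : Prop :=
  ∃ w, f w ≠ 0 ∧ D = G.weakDomain f w

/-- The number `𝔚(f)` of weak nodal domains. -/
noncomputable def weakDomainCount (G : SignedHypergraph V E) (f : V → ℝ) : ℕ :=
  Set.ncard {D : Set V | G.IsWeakNodalDomain f D}

/-- The number of connected components of the subhypergraph induced on the vertex set `A`
with edges restricted to those satisfying `P`. -/
noncomputable def componentsOn (G : SignedHypergraph V E) (A : Finset V) (P : E → Prop) : ℕ :=
  Set.ncard {C : Set V | ∃ v ∈ A, C =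
    {u | u ∈ A ∧ Relation.ReflTransGen
      (fun x y => x ∈ A ∧ y ∈ A ∧ ∃ e, P e ∧ G.sign x e ≠ 0 ∧ G.sign y e ≠ 0) v u}}

/-- The cyclomatic number `l = ∑_e (|e|-1) - |V| + c` of the subhypergraph induced on `A`
with edges restricted to those satisfying `P`. -/
noncomputable def cyclomaticOn (G : SignedHypergraph V E) (A : Finset V) (P : E → Prop) : ℤ :=
  (∑ e ∈ Finset.univ.filter (fun e : E => P e ∧ (G.edgeVerts e ∩ A).Nonempty),
      (((G.edgeVerts e ∩ A).card : ℤ) - 1)) -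
    (A.card : ℤ) + (G.componentsOn A P : ℤ)

/-- An edge all of whose pairs of (distinct) vertices `x, y` satisfy
`f x · sgn e · f y > 0`. -/
def posEdge (G : SignedHypergraph V E) (f : V → ℝ) (e : E) : Prop :=
  ∀ x y : V, G.sign x e ≠ 0 → G.sign y e ≠ 0 → x ≠ y → 0 < f x * G.edgeSign e * f y

/-- An edge of the subhypergraph `S` on the support of `f`. -/
def sEdge (G : SignedHypergraph V E) (f : V → ℝ) (e : E) : Prop :=
  (∀ v, G.sign v e ≠ 0 → f v ≠ 0) ∧ G.posEdge f e

/-- The subhypergraph with edge set `P` contains a cycle. -/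
def HasCycle (G : SignedHypergraph V E) (P : E → Prop) : Prop :=
  ∃ (q : ℕ) (v : Fin (q + 1) → V) (e : Fin q → E), 2 ≤ q ∧
    Function.Injective (fun t : Fin q => v t.castSucc) ∧ Function.Injective e ∧
    v (Fin.last q) = v 0 ∧
    ∀ t : Fin q, P (e t) ∧ G.sign (v t.castSucc) (e t) ≠ 0 ∧ G.sign (v t.succ) (e t) ≠ 0

/-- A tree-like vertex: its removal increases the number of connected components
by `deg x - 1`. -/
def Treelike (G : SignedHypergraph V E) (x : V) : Prop :=
  (G.componentsOn (Finset.univ.erase x) (fun _ => True) : ℤ) =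
    (G.componentsOn Finset.univ (fun _ => True) : ℤ) + (G.deg x : ℤ) - 1

/-- The Fiedler zero set of `f`: zeros `x` of `f` such that either all vertices sharing an
edge with `x` are zeros, or `x` is not tree-like. -/
def fiedlerSet (G : SignedHypergraph V E) (f : V → ℝ) : Set V :=
  {x | f x = 0 ∧ ((∀ y, G.Adjacent x y → f y = 0) ∨ ¬ G.Treelike x)}

/-- Weak deletion of the vertices in `R`: each vertex of `R` is removed from every hyperedge
(possibly creating empty edges). -/
def weakDelete (G : SignedHypergraph V E) (R : Finset V) :
    SignedHypergraph {v : V // v ∉ R} E :=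
  ⟨fun v e => G.sign v.1 e, fun v e => G.sign_values v.1 e⟩

end SignedHypergraph

/-! ## Plain hypergraphs -/

structure PlainHypergraph (V : Type) where
  verts : Finset V
  edges : Finset (Finset V)
  edge_subset : ∀ e ∈ edges, e ⊆ verts

namespace PlainHypergraph

variable {V : Type} [DecidableEq V]

def Adjacent (H : PlainHypergraph V) (x y : V) : Prop := ∃ e ∈ H.edges, x ∈ e ∧ y ∈ e

def Connected (H : PlainHypergraph V) : Prop :=
  ∀ x ∈ H.verts, ∀ y ∈ H.verts, Relation.ReflTransGen H.Adjacent x y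

/-- A cycle: an alternating closed sequence of distinct vertices and distinct edges
`v 0, e 0, v 1, e 1, …, v q = v 0` of length `q ≥ 2` with `v t, v (t+1) ∈ e t`. -/
def IsCycle (H : PlainHypergraph V) {q : ℕ} (v : Fin (q + 1) → V) (e : Fin q → Finset V) : Prop :=
  2 ≤ q ∧ Function.Injective (fun t : Fin q => v t.castSucc) ∧ Function.Injective e ∧
    v (Fin.last q) = v 0 ∧
    ∀ t : Fin q, e t ∈ H.edges ∧ v t.castSucc ∈ e t ∧ v t.succ ∈ e t

def Acyclic (H : PlainHypergraph V) : Prop :=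
  ¬ ∃ (q : ℕ) (v : Fin (q + 1) → V) (e : Fin q → Finset V), H.IsCycle v e

/-- The number of connected components. -/
noncomputable def ncomp (H : PlainHypergraph V) : ℕ :=
  Set.ncard {C : Set V | ∃ v ∈ H.verts, C = {u | Relation.ReflTransGen H.Adjacent v u}}

/-- The cyclomatic number `l(H) = ∑_e (|e|-1) - |V| + c(H)`. -/
noncomputable def cyclomatic (H : PlainHypergraph V) : ℤ :=
  (∑ e ∈ H.edges, ((e.card : ℤ) - 1)) - (H.verts.card : ℤ) + (H.ncomp : ℤ)

def degree (H : PlainHypergraph V) (x : V) : ℕ := (H.edges.filter fun e => x ∈ e).card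

/-- The subhypergraph induced by a vertex set `A`: edges `e ∩ A` for `e ∩ A ≠ ∅`. -/
def induced (H : PlainHypergraph V) (A : Finset V) : PlainHypergraph V where
  verts := H.verts ∩ A
  edges := (H.edges.filter fun e => (e ∩ A).Nonempty).image fun e => e ∩ A
  edge_subset := by
    intro e' he'
    simp only [Finset.mem_image, Finset.mem_filter] at he'
    obtain ⟨e, ⟨heE, -⟩, rfl⟩ := he'
    intro x hx
    rcases Finset.mem_inter.mp hx with ⟨hxe, hxA⟩
    exact Finset.mem_inter.mpr ⟨H.edge_subset e heE hxe, hxA⟩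

/-- A tree-like vertex: deleting it (induced subhypergraph on the remaining vertices)
increases the number of connected components by `deg x - 1`. -/
def Treelike (H : PlainHypergraph V) (x : V) : Prop :=
  ((H.induced (H.verts.erase x)).ncomp : ℤ) = (H.ncomp : ℤ) + (H.degree x : ℤ) - 1

/-- Removal of a vertex together with all edges incident to it. -/
def deleteVert (H : PlainHypergraph V) (y : V) : PlainHypergraph V where
  verts := H.verts.erase y
  edges := H.edges.filter fun e => y ∉ e
  edge_subset := by
    intro e he
    rcases Finset.mem_filter.mp he with ⟨heE, hy⟩
    intro x hx
    exact Finset.mem_erase.mpr ⟨fun h => hy (h ▸ hx), H.edge_subset e heE hx⟩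

/-- A spanning hyperforest of `H`: a maximal acyclic spanning subhypergraph. -/
def IsSpanningHyperforest (H T : PlainHypergraph V) : Prop :=
  T.verts = H.verts ∧ T.edges ⊆ H.edges ∧ T.Acyclic ∧
    ∀ T' : PlainHypergraph V, T'.verts = H.verts → T'.edges ⊆ H.edges → T'.Acyclic →
      T.edges ⊆ T'.edges → T'.edges = T.edges

end PlainHypergraph

/-- The positive index of inertia of a real matrix: the number of positive roots of its
characteristic polynomial, counted with multiplicity. -/
noncomputable def posInertia {m : Type} [Fintype m] [DecidableEq m] (M : Matrix m m ℝ) : ℕ :=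
  (M.charpoly.roots.filter fun x => 0 < x).card

/-- The bordered matrix `[[B, a], [aᵀ, b]]`. -/
def borderMatrix {n : ℕ} (B : Matrix (Fin n) (Fin n) ℝ) (a : Fin n → ℝ) (b : ℝ) :
    Matrix (Fin n ⊕ Unit) (Fin n ⊕ Unit) ℝ :=
  Matrix.fromBlocks B (Matrix.of fun i _ => a i) (Matrix.of fun _ j => a j)
    (Matrix.of fun _ _ => b)

/-! Inside the component of `x`, the graph `H - x` has one component for each class of edges at
`x` whose other vertices are joined avoiding `x`; all other components of `H` survive unchanged.
Hence `c(H - x) ≤ c(H) + deg x - 1`, with equality exactly when every edge at `x` has a vertex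
besides `x` and no path avoiding `x` joins two distinct edges at `x`. Deleting `y ≠ x` together
with its edges only removes edges and paths, so this condition persists. -/

namespace PlainHypergraph

section Reachability

variable {V : Type} (H : PlainHypergraph V)

abbrev Reachable (a b : V) : Prop := Relation.ReflTransGen H.Adjacent a b

def component (v : V) : Set V := {u | H.Reachable v u}

instance : Std.Symm H.Adjacent := ⟨fun _ _ ⟨e, he, ha, hb⟩ => ⟨e, he, hb, ha⟩⟩

variable {H}

lemma Adjacent.left_mem {a b : V} (h : H.Adjacent a b) : a ∈ H.verts :=
  let ⟨e, he, hae, _⟩ := h; H.edge_subset e he hae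

lemma Adjacent.right_mem {a b : V} (h : H.Adjacent a b) : b ∈ H.verts :=
  let ⟨e, he, _, hbe⟩ := h; H.edge_subset e he hbe

lemma Adjacent.mono {H' : PlainHypergraph V} (hE : H'.edges ⊆ H.edges) {a b : V}
    (h : H'.Adjacent a b) : H.Adjacent a b :=
  let ⟨e, he, hae, hbe⟩ := h; ⟨e, hE he, hae, hbe⟩

lemma Reachable.symm {a b : V} (h : H.Reachable a b) : H.Reachable b a :=
  Std.Symm.symm _ _ h

lemma component_eq_of_reachable {a b : V} (h : H.Reachable a b) :
    H.component a = H.component b :=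
  Set.ext fun _ => ⟨h.symm.trans, h.trans⟩

lemma mem_component_self (v : V) : v ∈ H.component v := Relation.ReflTransGen.refl

variable (H)

lemma ncomp_eq_card_image_component : H.ncomp = (H.verts.image H.component).card := by
  rw [← Set.ncard_coe_finset, ncomp, Finset.coe_image]
  congr 1
  ext C
  simp only [Set.mem_ofPred_eq, Set.mem_image, Finset.mem_coe, eq_comm, component]

end Reachability

variable {V : Type} [DecidableEq V] (H : PlainHypergraph V)

abbrev eraseVert (x : V) : PlainHypergraph V := H.induced (H.verts.erase x)

def edgesAt (x : V) : Finset (Finset V) := H.edges.filter fun e => x ∈ e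

lemma induced_adjacent_iff (A : Finset V) {a b : V} :
    (H.induced A).Adjacent a b ↔ H.Adjacent a b ∧ a ∈ A ∧ b ∈ A := by
  simp only [Adjacent, induced, Finset.mem_image, Finset.mem_filter]
  constructor
  · rintro ⟨_, ⟨e, ⟨he, -⟩, rfl⟩, ha, hb⟩
    exact ⟨⟨e, he, (mem_inter.1 ha).1, (mem_inter.1 hb).1⟩, (mem_inter.1 ha).2, (mem_inter.1 hb).2⟩
  · rintro ⟨⟨e, he, hae, hbe⟩, haA, hbA⟩
    exact ⟨e ∩ A, ⟨e, ⟨he, a, mem_inter.2 ⟨hae, haA⟩⟩, rfl⟩,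
      mem_inter.2 ⟨hae, haA⟩, mem_inter.2 ⟨hbe, hbA⟩⟩

lemma eraseVert_adjacent_iff (x : V) {a b : V} :
    (H.eraseVert x).Adjacent a b ↔ H.Adjacent a b ∧ a ≠ x ∧ b ≠ x := by
  rw [induced_adjacent_iff]
  exact ⟨fun ⟨h, ha, hb⟩ => ⟨h, (mem_erase.1 ha).1, (mem_erase.1 hb).1⟩,
    fun ⟨h, ha, hb⟩ => ⟨h, mem_erase.2 ⟨ha, h.left_mem⟩, mem_erase.2 ⟨hb, h.right_mem⟩⟩⟩

lemma ncomp_induced_verts : (H.induced H.verts).ncomp = H.ncomp := by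
  have hadj : (H.induced H.verts).Adjacent = H.Adjacent := by
    ext a b
    rw [induced_adjacent_iff]
    exact ⟨And.left, fun h => ⟨h, h.left_mem, h.right_mem⟩⟩
  have hverts : (H.induced H.verts).verts = H.verts := Finset.inter_self _
  unfold ncomp
  rw [hadj, hverts]

lemma degree_eq_zero_of_notMem {x : V} (hx : x ∉ H.verts) : H.degree x = 0 :=
  card_eq_zero.2 <| filter_eq_empty_iff.2 fun e he hxe => hx (H.edge_subset e he hxe)

variable {H}

lemma Treelike.mem_verts {x : V} (h : H.Treelike x) : x ∈ H.verts := by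
  by_contra hx
  rw [Treelike, erase_eq_of_notMem hx, ncomp_induced_verts, degree_eq_zero_of_notMem H hx] at h
  omega

lemma Reachable.of_eraseVert {x a b : V} (h : (H.eraseVert x).Reachable a b) :
    H.Reachable a b :=
  Relation.ReflTransGen.mono (fun _ _ h' => ((H.eraseVert_adjacent_iff x).1 h').1) _ _ h

lemma Reachable.eraseVert_of_not_reachable {x v u : V} (hv : ¬ H.Reachable x v)
    (h : H.Reachable v u) : (H.eraseVert x).Reachable v u := by
  induction h with
  | refl => exact .refl
  | @tail b c hvb hbc ih =>
    refine ih.tail ((H.eraseVert_adjacent_iff x).2 ⟨hbc, ?_, ?_⟩)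
    · rintro rfl; exact hv (Reachable.symm hvb)
    · rintro rfl; exact hv (Reachable.symm (hvb.tail hbc))

lemma eraseVert_component_of_not_reachable {x v : V} (hv : ¬ H.Reachable x v) :
    (H.eraseVert x).component v = H.component v :=
  Set.ext fun _ => ⟨Reachable.of_eraseVert, Reachable.eraseVert_of_not_reachable hv⟩

lemma exists_edge_of_reachable {x v : V} (h : H.Reachable x v) (hv : v ≠ x) :
    ∃ e ∈ H.edgesAt x, ∃ w ∈ e, w ≠ x ∧ (H.eraseVert x).Reachable w v := by
  induction h with
  | refl => exact absurd rfl hv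
  | @tail b c hxb hbc ih =>
    by_cases hb : b = x
    · subst hb
      obtain ⟨e, he, hbe, hce⟩ := hbc
      exact ⟨e, mem_filter.2 ⟨he, hbe⟩, c, hce, hv, .refl⟩
    · obtain ⟨e, he, w, hw, hwx, hwb⟩ := ih hb
      exact ⟨e, he, w, hw, hwx, hwb.tail ((H.eraseVert_adjacent_iff x).2 ⟨hbc, hb, hv⟩)⟩

variable (H)

def edgeComponent (x : V) (e : Finset V) : Set V :=
  {u | ∃ w ∈ e, w ≠ x ∧ (H.eraseVert x).Reachable w u}

noncomputable def nbrComponents (x : V) : Finset (Set V) :=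
  ((H.edgesAt x).filter fun e => ∃ w ∈ e, w ≠ x).image (H.edgeComponent x)

variable {H}

lemma edgeComponent_eq {x w : V} {e : Finset V} (he : e ∈ H.edges) (hw : w ∈ e) (hwx : w ≠ x) :
    H.edgeComponent x e = (H.eraseVert x).component w := by
  ext u
  refine ⟨fun ⟨w', hw', hw'x, h⟩ => .head ?_ h, fun h => ⟨w, hw, hwx, h⟩⟩
  exact (H.eraseVert_adjacent_iff x).2 ⟨⟨e, he, hw, hw'⟩, hwx, hw'x⟩

lemma image_component_eraseVert {x : V} :
    (H.verts.erase x).image (H.eraseVert x).component =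
      H.nbrComponents x ∪ (H.verts.image H.component).erase (H.component x) := by
  ext C
  simp only [nbrComponents, mem_union, mem_image, mem_erase, mem_filter]
  constructor
  · rintro ⟨v, ⟨hvx, hv⟩, rfl⟩
    by_cases hxv : H.Reachable x v
    · obtain ⟨e, he, w, hw, hwx, hwv⟩ := exists_edge_of_reachable hxv hvx
      left
      refine ⟨e, ⟨he, w, hw, hwx⟩, ?_⟩
      rw [edgeComponent_eq (mem_filter.1 he).1 hw hwx, component_eq_of_reachable hwv]
    · right
      rw [eraseVert_component_of_not_reachable hxv]
      exact ⟨fun h => hxv (Reachable.symm (h.symm ▸ mem_component_self x : x ∈ H.component v)),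
        v, hv, rfl⟩
  · rintro (⟨e, ⟨he, w, hw, hwx⟩, rfl⟩ | ⟨hCx, v, hv, rfl⟩)
    · exact ⟨w, ⟨hwx, H.edge_subset e (mem_filter.1 he).1 hw⟩,
        (edgeComponent_eq (mem_filter.1 he).1 hw hwx).symm⟩
    · have hxv : ¬ H.Reachable x v := fun h => hCx (component_eq_of_reachable h).symm
      exact ⟨v, ⟨fun h => hxv (h ▸ .refl), hv⟩, eraseVert_component_of_not_reachable hxv⟩

lemma disjoint_nbrComponents (x : V) :
    Disjoint (H.nbrComponents x) ((H.verts.image H.component).erase (H.component x)) := by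
  rw [disjoint_left]
  rintro C hC hC'
  obtain ⟨e, ⟨he, w, hw, hwx⟩, rfl⟩ := mem_image.1 hC |>.imp fun _ => And.imp_left mem_filter.1
  obtain ⟨hCx, v, -, hv⟩ := (mem_erase.1 hC').imp_right mem_image.1
  have hvw : H.Reachable v w := by
    have : w ∈ H.edgeComponent x e := ⟨w, hw, hwx, .refl⟩
    rwa [← hv] at this
  have hxw : H.Reachable x w := .single ⟨e, (mem_filter.1 he).1, (mem_filter.1 he).2, hw⟩
  exact hCx (hv ▸ (component_eq_of_reachable (hxw.trans (Reachable.symm hvw))).symm)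

variable (H)

lemma ncomp_eraseVert_add_one {x : V} (hx : x ∈ H.verts) :
    (H.eraseVert x).ncomp + 1 = H.ncomp + (H.nbrComponents x).card := by
  have hverts : (H.eraseVert x).verts = H.verts.erase x := inter_eq_right.2 (erase_subset x _)
  have hmem : H.component x ∈ H.verts.image H.component := mem_image_of_mem _ hx
  rw [ncomp_eq_card_image_component, ncomp_eq_card_image_component, hverts,
    image_component_eraseVert, card_union_of_disjoint (disjoint_nbrComponents x),
    card_erase_of_mem hmem]
  have := card_pos.2 ⟨_, hmem⟩
  omega

lemma card_nbrComponents_le_degree (x : V) : (H.nbrComponents x).card ≤ H.degree x :=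
  card_image_le.trans (card_filter_le _ _)

def EdgesSeparatedAt (x : V) : Prop :=
  (∀ e ∈ H.edgesAt x, ∃ w ∈ e, w ≠ x) ∧
    ∀ e ∈ H.edgesAt x, ∀ f ∈ H.edgesAt x, ∀ w ∈ e, ∀ w' ∈ f, w ≠ x → w' ≠ x →
      (H.eraseVert x).Reachable w w' → e = f

lemma degree_le_card_nbrComponents_iff (x : V) :
    H.degree x ≤ (H.nbrComponents x).card ↔ H.EdgesSeparatedAt x := by
  set T := (H.edgesAt x).filter fun e => ∃ w ∈ e, w ≠ x
  change (H.edgesAt x).card ≤ (T.image (H.edgeComponent x)).card ↔ _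
  constructor
  · intro h
    have hT : T = H.edgesAt x := eq_of_subset_of_card_le (filter_subset _ _) (h.trans card_image_le)
    have hinj : Set.InjOn (H.edgeComponent x) T :=
      card_image_iff.1 (card_image_le.antisymm (hT ▸ h))
    rw [hT] at hinj
    refine ⟨fun e he => (mem_filter.1 (hT.symm ▸ he : e ∈ T)).2,
      fun e he f hf w hw w' hw' hwx hw'x hww' => hinj he hf ?_⟩
    rw [edgeComponent_eq (mem_filter.1 he).1 hw hwx, edgeComponent_eq (mem_filter.1 hf).1 hw' hw'x]
    exact component_eq_of_reachable hww'
  · rintro ⟨hne, hsep⟩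
    have hT : T = H.edgesAt x := filter_true_of_mem hne
    have hinj : Set.InjOn (H.edgeComponent x) T := by
      intro e he f hf hef
      rw [coe_filter] at he hf
      obtain ⟨w, hw, hwx⟩ := he.2
      obtain ⟨w', hw', hw'x⟩ := hf.2
      rw [edgeComponent_eq (mem_filter.1 he.1).1 hw hwx,
        edgeComponent_eq (mem_filter.1 hf.1).1 hw' hw'x] at hef
      have : w' ∈ (H.eraseVert x).component w := hef ▸ mem_component_self w'
      exact hsep e he.1 f hf.1 w hw w' hw' hwx hw'x this
    rw [card_image_of_injOn hinj, hT]

variable {H}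

lemma EdgesSeparatedAt.mono {H' : PlainHypergraph V} (hE : H'.edges ⊆ H.edges) {x : V}
    (h : H.EdgesSeparatedAt x) : H'.EdgesSeparatedAt x := by
  have hat : H'.edgesAt x ⊆ H.edgesAt x := filter_subset_filter _ hE
  have hreach {a b : V} : (H'.eraseVert x).Reachable a b → (H.eraseVert x).Reachable a b :=
    Relation.ReflTransGen.mono (fun _ _ hab => (H.eraseVert_adjacent_iff x).2
      (((H'.eraseVert_adjacent_iff x).1 hab).imp_left (Adjacent.mono hE))) _ _
  exact ⟨fun e he => h.1 e (hat he), fun e he f hf w hw w' hw' hwx hw'x hww' =>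
    h.2 e (hat he) f (hat hf) w hw w' hw' hwx hw'x (hreach hww')⟩

lemma treelike_iff_edgesSeparatedAt {x : V} (hx : x ∈ H.verts) :
    H.Treelike x ↔ H.EdgesSeparatedAt x := by
  have hcount := H.ncomp_eraseVert_add_one hx
  have hle := H.card_nbrComponents_le_degree x
  unfold eraseVert at hcount
  rw [Treelike, ← degree_le_card_nbrComponents_iff]
  omega

end PlainHypergraph

theorem stmt13 {V : Type} [DecidableEq V] (H : PlainHypergraph V) (x y : V) (hxy : y ≠ x)
    (htl : H.Treelike x) : (H.deleteVert y).Treelike x := by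
  have hx : x ∈ H.verts := htl.mem_verts
  have hx' : x ∈ (H.deleteVert y).verts := mem_erase.2 ⟨hxy.symm, hx⟩
  rw [PlainHypergraph.treelike_iff_edgesSeparatedAt hx] at htl
  exact (PlainHypergraph.treelike_iff_edgesSeparatedAt hx').2 (htl.mono (filter_subset _ _))
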